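/- arXiv:2304.14557 — 6 statements merged into one kernel-verified Lean document; each statement's English description precedes it below -/
import Mathlib

section
/- If k = m·n for positive integers m, n with m ≥ 3, then emb_k(H) ≥ emb_m(H), where emb_j(H) = j / wed(C_j ↦ H). -/
open Finset

structure Hypergraph' (V : Type*) [DecidableEq V] [Fintype V] where
  edges : Finset (Finset V)

namespace Hypergraph'

variable {V : Type*} [DecidableEq V] [Fintype V]

/-- Two vertex sets touch in `H`: they intersect, or some hyperedge meets both. -/
def touch (H : Hypergraph' V) (S T : Finset V) : Prop :=
  (S ∩ T).Nonempty ∨ ∃ e ∈ H.edges, (e ∩ S).Nonempty ∧ (e ∩ T).Nonempty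

/-- `S` induces a connected subhypergraph of `H`. -/
def connSet (H : Hypergraph' V) (S : Finset V) : Prop :=
  ∀ a ∈ S, ∀ b ∈ S,
    Relation.ReflTransGen (fun x y => x ∈ S ∧ y ∈ S ∧ ∃ e ∈ H.edges, x ∈ e ∧ y ∈ e) a b

/-- An embedding of the `k`-clique into the hypergraph `H`. -/
def IsCliqueEmb (H : Hypergraph' V) (k : ℕ) (ψ : Fin k → Finset V) : Prop :=
  (∀ i, (ψ i).Nonempty) ∧ (∀ i, H.connSet (ψ i)) ∧
    ∀ i j : Fin k, i ≠ j → H.touch (ψ i) (ψ j)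

/-- The weak edge depth of an embedding: the max over hyperedges `e` of the number
of clique vertices whose image meets `e`. -/
def wedOf (H : Hypergraph' V) {k : ℕ} (ψ : Fin k → Finset V) : ℕ :=
  H.edges.sup fun e => (Finset.univ.filter fun i : Fin k => ((ψ i) ∩ e).Nonempty).card

/-- `wed (C_k ↦ H)`: the minimum weak edge depth over embeddings of the `k`-clique. -/
noncomputable def wed (H : Hypergraph' V) (k : ℕ) : ℕ :=
  sInf {w | ∃ ψ : Fin k → Finset V, H.IsCliqueEmb k ψ ∧ H.wedOf ψ ≤ w}

end Hypergraph'

/-!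
Pulling an embedding `ψ` of `C_m` back along a map `f : Fin k → Fin m` gives an embedding of
`C_k`: two clique vertices with the same image share the nonempty set they are mapped to. Each
hyperedge then meets at most (largest fibre of `f`) times as many branch sets. An injection
`Fin m → Fin k` gives `wed m ≤ wed k`, and bundling `Fin (m * n)` into `m` groups of size `n`
gives `wed (m * n) ≤ n * wed m`; these two bounds give the inequality.
-/

theorem card_filter_fst_finProdFinEquiv_symm_le {m n : ℕ} (j : Fin m) :
    #{i : Fin (m * n) | (finProdFinEquiv.symm i).1 = j} ≤ n := by
  simpa using card_le_card_of_injOn (t := (univ : Finset (Fin n)))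
    (fun i => (finProdFinEquiv.symm i).2)
    (fun _ _ => mem_coe.2 (mem_univ _))
    fun a ha b hb hab => finProdFinEquiv.symm.injective (Prod.ext (by simp_all) hab)

namespace Hypergraph'

variable {V : Type*} [DecidableEq V] [Fintype V] (H : Hypergraph' V)

theorem IsCliqueEmb.comp {m k : ℕ} {ψ : Fin m → Finset V} (hψ : H.IsCliqueEmb m ψ)
    (f : Fin k → Fin m) : H.IsCliqueEmb k (ψ ∘ f) := by
  obtain ⟨hne, hconn, htouch⟩ := hψ
  refine ⟨fun i => hne (f i), fun i => hconn (f i), fun i j _ => ?_⟩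
  by_cases hij : f i = f j
  · exact Or.inl (by simpa [hij] using hne (f j))
  · exact htouch _ _ hij

theorem wedOf_comp_le {m k n : ℕ} (ψ : Fin m → Finset V) (f : Fin k → Fin m)
    (hf : ∀ j, #{i | f i = j} ≤ n) : H.wedOf (ψ ∘ f) ≤ n * H.wedOf ψ := by
  refine Finset.sup_le fun e he => ?_
  calc #{i | ((ψ ∘ f) i ∩ e).Nonempty}
      ≤ n * #{j | (ψ j ∩ e).Nonempty} :=
        card_le_mul_card_image_of_maps_to (f := f) (by simp) n
          fun j _ => (card_le_card (by intro i; simp +contextual)).trans (hf j)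
    _ ≤ n * H.wedOf ψ :=
        Nat.mul_le_mul_left n (le_sup (f := fun e => #{j | (ψ j ∩ e).Nonempty}) he)

theorem isCliqueEmb_const_univ [Nonempty V] (hconn : H.connSet univ) (k : ℕ) :
    H.IsCliqueEmb k fun _ => univ :=
  ⟨fun _ => univ_nonempty, fun _ => hconn, fun _ _ _ => Or.inl (by simp)⟩

theorem exists_isCliqueEmb_wedOf_le_wed {k : ℕ} (h : ∃ ψ, H.IsCliqueEmb k ψ) :
    ∃ ψ, H.IsCliqueEmb k ψ ∧ H.wedOf ψ ≤ H.wed k :=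
  let ⟨ψ, hψ⟩ := h
  Nat.sInf_mem (s := {w | ∃ ψ, H.IsCliqueEmb k ψ ∧ H.wedOf ψ ≤ w}) ⟨H.wedOf ψ, ψ, hψ, le_rfl⟩

theorem wed_le_mul_wed {m k n : ℕ} (h : ∃ ψ, H.IsCliqueEmb m ψ) (f : Fin k → Fin m)
    (hf : ∀ j, #{i | f i = j} ≤ n) : H.wed k ≤ n * H.wed m := by
  obtain ⟨ψ, hψ, hwed⟩ := H.exists_isCliqueEmb_wedOf_le_wed h
  exact Nat.sInf_le ⟨ψ ∘ f, hψ.comp H f,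
    (H.wedOf_comp_le ψ f hf).trans (Nat.mul_le_mul_left n hwed)⟩

theorem wed_mono {m k : ℕ} (h : ∃ ψ, H.IsCliqueEmb k ψ) (hmk : m ≤ k) :
    H.wed m ≤ H.wed k := by
  simpa using H.wed_le_mul_wed h (Fin.castLE hmk) fun j =>
    card_le_one.2 fun a ha b hb => Fin.castLE_injective hmk (by simp_all)

theorem wed_mul_le {m n : ℕ} (h : ∃ ψ, H.IsCliqueEmb m ψ) : H.wed (m * n) ≤ n * H.wed m :=
  H.wed_le_mul_wed h (fun i => (finProdFinEquiv.symm i).1) card_filter_fst_finProdFinEquiv_symm_le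

end Hypergraph'

theorem emb_mul_ge_general {V : Type*} [DecidableEq V] [Fintype V] [Nonempty V]
    (H : Hypergraph' V) (hconn : H.connSet Finset.univ) (m n k : ℕ)
    (hn : 1 ≤ n) (hk : k = m * n) :
    (m : ℚ) / (H.wed m : ℚ) ≤ (k : ℚ) / (H.wed k : ℚ) := by
  subst hk
  have hemb (j : ℕ) : ∃ ψ, H.IsCliqueEmb j ψ := ⟨_, H.isCliqueEmb_const_univ hconn j⟩
  have hmono : H.wed m ≤ H.wed (m * n) := H.wed_mono (hemb _) (Nat.le_mul_of_pos_right m hn)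
  have hbundle : H.wed (m * n) ≤ n * H.wed m := H.wed_mul_le (hemb m)
  rcases (H.wed m).eq_zero_or_pos with h0 | hpos
  · simp only [h0, CharP.cast_eq_zero, div_zero]
    positivity
  · rw [div_le_div_iff₀ (by exact_mod_cast hpos) (by exact_mod_cast hpos.trans_le hmono)]
    exact_mod_cast (Nat.mul_le_mul_left m hbundle).trans_eq (Nat.mul_assoc m n _).symm

/-- If `k = m * n` with `m ≥ 3`, `n ≥ 1`, then `emb_k(H) ≥ emb_m(H)`, where
`emb_j(H) = j / wed(C_j ↦ H)`. -/
theorem emb_mul_ge {V : Type*} [DecidableEq V] [Fintype V] [Nonempty V]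
    (H : Hypergraph' V) (hconn : H.connSet Finset.univ) (m n k : ℕ)
    (hm : 3 ≤ m) (hn : 1 ≤ n) (hk : k = m * n) :
    (m : ℚ) / (H.wed m : ℚ) ≤ (k : ℚ) / (H.wed k : ℚ) :=
  emb_mul_ge_general H hconn m n k hn hk
end

section
/- Let H be a hypergraph, ψ an embedding of the k-clique C_k into H, and (T, χ) a tree decomposition of H. Then there exists a node t of T such that ψ(i) ∩ χ(t) ≠ ∅ for every i = 1, …, k. -/
/-!
For each `i`, the nodes whose bags meet `ψ i` form a subtree of `T`: they are the union of the
subtrees `{t | v ∈ χ t}` for `v ∈ ψ i`, and consecutive vertices of a hyperedge walk inside `ψ i`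
have overlapping subtrees, because every hyperedge lies in some bag. Two of these subtrees
intersect since `ψ i` and `ψ j` touch, so by the Helly property of subtrees of a tree they share
a node.
-/

open Finset

/-- A tree decomposition of a hypergraph. -/
structure IsTreeDecomp {V : Type*} [DecidableEq V] [Fintype V] {ι : Type*}
    (H : Hypergraph' V) (T : SimpleGraph ι) (χ : ι → Finset V) : Prop where
  tree : T.IsTree
  covers : ∀ e ∈ H.edges, ∃ t, e ⊆ χ t
  conn : ∀ v : V, (T.induce {t | v ∈ χ t}).Connected


namespace SimpleGraph

variable {V : Type*} {G : SimpleGraph V}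

theorem Walk.IsPath.append {u v w : V} {p : G.Walk u v} {q : G.Walk v w} (hp : p.IsPath)
    (hq : q.IsPath) (hpq : ∀ x ∈ p.support, x ∈ q.support → x = v) : (p.append q).IsPath := by
  rw [Walk.isPath_def, Walk.support_append]
  have hq' := hq.support_nodup
  rw [← q.cons_tail_support, List.nodup_cons] at hq'
  refine hp.support_nodup.append hq'.2 fun x hxp hxq => ?_
  obtain rfl := hpq x hxp (List.mem_of_mem_tail hxq)
  exact hq'.1 hxq

theorem IsAcyclic.length_eq_dist_of_isPath (hG : G.IsAcyclic) {u v : V} {p : G.Walk u v}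
    (hp : p.IsPath) : p.length = G.dist u v := by
  obtain ⟨q, hq, hlen⟩ := p.reachable.exists_path_of_dist
  obtain rfl : p = q := congrArg Subtype.val ((hG.subsingleton_path u v).elim ⟨p, hp⟩ ⟨q, hq⟩)
  exact hlen

theorem IsAcyclic.mem_of_mem_support_of_isPath (hG : G.IsAcyclic) {S : Set V}
    (hS : (G.induce S).Preconnected) {a b : V} (ha : a ∈ S) (hb : b ∈ S) {p : G.Walk a b}
    (hp : p.IsPath) : ∀ x ∈ p.support, x ∈ S := by
  classical
  obtain ⟨q⟩ := hS ⟨a, ha⟩ ⟨b, hb⟩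
  set q' : G.Walk a b := q.map (Embedding.induce S).toHom
  have hq' : q'.bypass = p :=
    congrArg Subtype.val ((hG.subsingleton_path a b).elim ⟨_, q'.bypass_isPath⟩ ⟨p, hp⟩)
  intro x hx
  rw [← hq'] at hx
  obtain ⟨y, -, rfl⟩ := List.mem_map.1 (Walk.support_map _ q ▸ q'.support_bypass_subset_support hx)
  exact y.2

theorem IsAcyclic.mem_support_dropUntil_of_dist_le [DecidableEq V] (hG : G.IsAcyclic) {r x y z : V}
    {p : G.Walk r x} (hp : p.IsPath) (hy : y ∈ p.support) (hz : z ∈ p.support)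
    (hyz : G.dist r y ≤ G.dist r z) : z ∈ (p.dropUntil y hy).support := by
  rw [← p.take_spec hy, Walk.support_append] at hz
  rcases List.mem_append.1 hz with hz | hz
  · by_cases hzy : z = y
    · subst hzy
      exact Walk.start_mem_support _
    have hlt := Walk.length_takeUntil_lt_length hz hzy
    have hdist := G.dist_le ((p.takeUntil y hy).takeUntil z hz)
    rw [hG.length_eq_dist_of_isPath (hp.takeUntil hy)] at hlt
    omega
  · exact List.mem_of_mem_tail hz

theorem IsAcyclic.mem_support_of_forall_dist_le (hG : G.IsAcyclic) {S : Set V}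
    (hS : (G.induce S).Preconnected) {r m x : V} (hm : m ∈ S)
    (hmin : ∀ y ∈ S, G.dist r m ≤ G.dist r y) (hx : x ∈ S) {p : G.Walk r x} (hp : p.IsPath) :
    m ∈ p.support := by
  classical
  have hmx : G.Reachable m x := (hS ⟨m, hm⟩ ⟨x, hx⟩).map (Embedding.induce S).toHom
  obtain ⟨q, hq, -⟩ := hmx.exists_path_of_dist
  have hqS := hG.mem_of_mem_support_of_isPath hS hm hx hq
  obtain ⟨p', hp', hp'len⟩ := (p.reachable.trans q.reachable.symm).exists_path_of_dist
  have hmeet : ∀ y ∈ p'.support, y ∈ q.support → y = m := by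
    intro y hy hyq
    by_contra hym
    have hlt := Walk.length_takeUntil_lt_length hy hym
    have hdist := G.dist_le (p'.takeUntil y hy)
    have := hmin y (hqS y hyq)
    omega
  have hpath : p'.append q = p :=
    congrArg Subtype.val ((hG.subsingleton_path r x).elim ⟨_, hp'.append hq hmeet⟩ ⟨p, hp⟩)
  rw [← hpath, Walk.support_append]
  exact List.mem_append_left _ p'.end_mem_support

/-- Helly property of subtrees. Root the tree at `r` and let `m i` be the node of `s i` nearest to
`r`, through which every path from `r` into `s i` passes. The deepest `m i₀` lies in every `s j`:
for `x ∈ s i₀ ∩ s j`, both `m j` and `m i₀` lie on the path from `r` to `x`, the latter after the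
former, so `m i₀` is on the path from `m j` to `x`, which stays inside `s j`. -/
theorem IsTree.iInter_nonempty_of_pairwise_inter_nonempty (hG : G.IsTree) {κ : Type*} [Finite κ]
    (s : κ → Set V) (hs : ∀ i, (G.induce (s i)).Connected)
    (hst : Pairwise fun i j => (s i ∩ s j).Nonempty) : (⋂ i, s i).Nonempty := by
  classical
  obtain ⟨r⟩ := hG.connected.nonempty
  cases isEmpty_or_nonempty κ
  · exact ⟨r, Set.mem_iInter.2 isEmptyElim⟩
  have hgate : ∀ i, ∃ m ∈ s i, ∀ y ∈ s i, G.dist r m ≤ G.dist r y := fun i =>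
    have hne : (s i).Nonempty := let ⟨⟨t, ht⟩⟩ := (hs i).nonempty; ⟨t, ht⟩
    ⟨_, Function.argminOn_mem _ _ hne, fun _ hy => Function.argminOn_le _ _ hy⟩
  choose m hm hmin using hgate
  obtain ⟨i₀, hi₀⟩ := Finite.exists_max fun i => G.dist r (m i)
  refine ⟨m i₀, Set.mem_iInter.2 fun j => ?_⟩
  obtain rfl | hj := eq_or_ne i₀ j
  · exact hm i₀
  obtain ⟨x, hxi₀, hxj⟩ := hst hj
  obtain ⟨p, hp, -⟩ := (hG.connected r x).exists_path_of_dist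
  have hmj := hG.isAcyclic.mem_support_of_forall_dist_le (hs j).preconnected (hm j) (hmin j) hxj hp
  have hmi₀ := hG.isAcyclic.mem_support_of_forall_dist_le (hs i₀).preconnected (hm i₀) (hmin i₀)
    hxi₀ hp
  exact hG.isAcyclic.mem_of_mem_support_of_isPath (hs j).preconnected (hm j) hxj
    (hp.dropUntil hmj) _ (hG.isAcyclic.mem_support_dropUntil_of_dist_le hp hmj hmi₀ (hi₀ j))

theorem induce_biUnion_connected_of_chain {α : Type*} {A : Set α} {f : α → Set V}
    (hf : ∀ a ∈ A, (G.induce (f a)).Connected) {a₀ : α} (ha₀ : a₀ ∈ A)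
    (hA : ∀ a ∈ A, Relation.ReflTransGen (fun b c => c ∈ A ∧ (f b ∩ f c).Nonempty) a₀ a) :
    (G.induce (⋃ a ∈ A, f a)).Connected := by
  obtain ⟨⟨u, hu⟩⟩ := (hf a₀ ha₀).nonempty
  have hpatch : ∀ a ∈ A, ∃ s ⊆ ⋃ a ∈ A, f a, f a ⊆ s ∧ u ∈ s ∧ (G.induce s).Connected := by
    intro a ha
    have hchain := hA a ha
    clear ha
    induction hchain with
    | refl => exact ⟨f a₀, Set.subset_biUnion_of_mem ha₀, subset_rfl, hu, hf a₀ ha₀⟩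
    | tail _ hbc ih =>
      obtain ⟨hc, hbc⟩ := hbc
      obtain ⟨s, hsA, hbs, hus, hs⟩ := ih
      exact ⟨s ∪ f _, Set.union_subset hsA (Set.subset_biUnion_of_mem hc),
        Set.subset_union_right, Or.inl hus, induce_union_connected hs.preconnected
          (hf _ hc).preconnected (hbc.mono (Set.inter_subset_inter_left _ hbs))⟩
  refine induce_connected_of_patches u (Set.mem_biUnion ha₀ hu) fun hv => ?_
  obtain ⟨a, ha, hv⟩ := Set.mem_iUnion₂.1 hv
  obtain ⟨s, hsA, has, hus, hs⟩ := hpatch a ha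
  exact ⟨s, hsA, hus, has hv, hs.preconnected _ _⟩

end SimpleGraph

def bagsMeeting {V ι : Type*} [DecidableEq V] (χ : ι → Finset V) (S : Finset V) : Set ι :=
  {t | (S ∩ χ t).Nonempty}

theorem bagsMeeting_eq_biUnion {V ι : Type*} [DecidableEq V] (χ : ι → Finset V) (S : Finset V) :
    bagsMeeting χ S = ⋃ v ∈ S, {t | v ∈ χ t} := by
  ext t
  simp [bagsMeeting, Finset.Nonempty]

namespace IsTreeDecomp

variable {V : Type*} [DecidableEq V] [Fintype V] {ι : Type*} {H : Hypergraph' V}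
  {T : SimpleGraph ι} {χ : ι → Finset V}

theorem connected_induce_bagsMeeting (hT : IsTreeDecomp H T χ) {S : Finset V}
    (hS : H.connSet S) (hne : S.Nonempty) : (T.induce (bagsMeeting χ S)).Connected := by
  obtain ⟨v₀, hv₀⟩ := hne
  rw [bagsMeeting_eq_biUnion]
  refine SimpleGraph.induce_biUnion_connected_of_chain (fun v _ => hT.conn v) hv₀
    fun v hv => Relation.ReflTransGen.mono (fun x y ⟨_, hy, e, he, hxe, hye⟩ => ⟨hy, ?_⟩) _ _
      (hS v₀ hv₀ v hv)
  obtain ⟨t, het⟩ := hT.covers e he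
  exact ⟨t, het hxe, het hye⟩

theorem bagsMeeting_inter_nonempty (hT : IsTreeDecomp H T χ) {S S' : Finset V}
    (h : H.touch S S') : (bagsMeeting χ S ∩ bagsMeeting χ S').Nonempty := by
  rcases h with ⟨v, hv⟩ | ⟨e, he, ⟨u, hu⟩, ⟨u', hu'⟩⟩
  · obtain ⟨⟨t, ht⟩⟩ := (hT.conn v).nonempty
    rw [Finset.mem_inter] at hv
    exact ⟨t, ⟨v, Finset.mem_inter.2 ⟨hv.1, ht⟩⟩, ⟨v, Finset.mem_inter.2 ⟨hv.2, ht⟩⟩⟩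
  · obtain ⟨t, het⟩ := hT.covers e he
    rw [Finset.mem_inter] at hu hu'
    exact ⟨t, ⟨u, Finset.mem_inter.2 ⟨hu.2, het hu.1⟩⟩, ⟨u', Finset.mem_inter.2 ⟨hu'.2, het hu'.1⟩⟩⟩

end IsTreeDecomp

/-- Given an embedding `ψ` of the `k`-clique into `H` and a tree decomposition
`(T, χ)` of `H`, some bag meets every image `ψ i`. -/
theorem exists_bag_meeting_all_images {V : Type*} [DecidableEq V] [Fintype V]
    {ι : Type*} (H : Hypergraph' V) (k : ℕ) (ψ : Fin k → Finset V)
    (hψ : H.IsCliqueEmb k ψ) (T : SimpleGraph ι) (χ : ι → Finset V)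
    (hT : IsTreeDecomp H T χ) :
    ∃ t : ι, ∀ i : Fin k, (ψ i ∩ χ t).Nonempty := by
  obtain ⟨hne, hconn, htouch⟩ := hψ
  obtain ⟨t, ht⟩ := hT.tree.iInter_nonempty_of_pairwise_inter_nonempty (bagsMeeting χ ∘ ψ)
    (fun i => hT.connected_induce_bagsMeeting (hconn i) (hne i))
    (fun i j hij => hT.bagsMeeting_inter_nonempty (htouch i j hij))
  exact ⟨t, Set.mem_iInter.1 ht⟩
end

section
/- For the cycle graph of length ℓ ≥ 3 (viewed as a hypergraph whose hyperedges are the ℓ cycle edges), the clique embedding power satisfies emb ≥ 2 − 1/⌈ℓ/2⌉. Concretely: if ℓ is odd, there is an embedding of the ℓ-clique into the ℓ-cycle with weak edge depth (ℓ+1)/2; if ℓ is even, there is an embedding of the (ℓ−1)-clique into the ℓ-cycle with weak edge depth ℓ/2. -/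
open Finset

/-- The clique embedding power of a hypergraph. -/
noncomputable def embPower {V : Type*} [DecidableEq V] [Fintype V] (H : Hypergraph' V) : ℝ :=
  sSup {x : ℝ | ∃ k : ℕ, 3 ≤ k ∧ x = (k : ℝ) / (H.wed k : ℝ)}

/-- The `ℓ`-cycle as a hypergraph: vertices `Fin ℓ`, hyperedges `{i, i+1}`. -/
def cycleHG (ℓ : ℕ) [NeZero ℓ] : Hypergraph' (Fin ℓ) :=
  ⟨Finset.univ.image fun i : Fin ℓ => ({i, i + 1} : Finset (Fin ℓ))⟩

/-!
For odd `ℓ = 2m + 1`, send clique vertex `i` to the arc of `m` consecutive cycle vertices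
starting at `i`. Of the two gaps between distinct starting points one is at most `m`, so any two
arcs overlap or are joined by an edge; and an arc meets the edge `{t, t + 1}` only if it starts at
one of the `m + 1` vertices `t + 1 - j`, `j ≤ m`. For even `ℓ`, the `ℓ`-cycle contracts onto the
`(ℓ - 1)`-cycle by merging the adjacent vertices `ℓ - 1` and `0`; pulling the odd embedding back
along this contraction keeps it a clique embedding without increasing any edge depth.
Since every vertex lies in an edge, `k ≤ #edges * wed k`, so the set defining `embPower` is
bounded and its supremum dominates `(2c - 1) / c` with `c = ⌈ℓ/2⌉`.
-/

section Preimage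

variable {V W : Type*} [DecidableEq V] [Fintype W]

def preimageFinset (π : W → V) (S : Finset V) : Finset W :=
  univ.filter fun x => π x ∈ S

@[simp]
theorem mem_preimageFinset {π : W → V} {S : Finset V} {x : W} :
    x ∈ preimageFinset π S ↔ π x ∈ S := by
  simp [preimageFinset]

theorem preimageFinset_inter_nonempty_iff [DecidableEq W] {π : W → V} {S : Finset V}
    {e : Finset W} :
    (preimageFinset π S ∩ e).Nonempty ↔ (S ∩ e.image π).Nonempty := by
  simp only [Finset.Nonempty, mem_inter, mem_preimageFinset, mem_image]
  exact ⟨fun ⟨x, hS, he⟩ => ⟨π x, hS, x, he, rfl⟩,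
    fun ⟨_, hS, x, he, hx⟩ => ⟨x, hx ▸ hS, he⟩⟩

end Preimage

namespace Hypergraph'

variable {V W : Type*} [DecidableEq V] [Fintype V] [DecidableEq W] [Fintype W]

section Connectivity

variable (H : Hypergraph' V) (S : Finset V)

def adjWithin (x y : V) : Prop :=
  x ∈ S ∧ y ∈ S ∧ ∃ e ∈ H.edges, x ∈ e ∧ y ∈ e

instance : Std.Symm (H.adjWithin S) where
  symm _ _ := fun ⟨hx, hy, e, he, hxe, hye⟩ => ⟨hy, hx, e, he, hye, hxe⟩

variable {H S}

theorem connSet_of_reflTransGen (a : V)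
    (h : ∀ x ∈ S, Relation.ReflTransGen (H.adjWithin S) a x) : H.connSet S :=
  fun x hx y hy => (Std.Symm.symm _ _ (h x hx)).trans (h y hy)

theorem touch.symm {T : Finset V} : H.touch S T → H.touch T S
  | .inl h => .inl (by rwa [inter_comm])
  | .inr ⟨e, he, hS, hT⟩ => .inr ⟨e, he, hT, hS⟩

end Connectivity

section EmbeddingPower

variable (H : Hypergraph' V)

theorem card_le_card_edges_mul_wedOf (hcover : ∀ v, ∃ e ∈ H.edges, v ∈ e)
    {k : ℕ} {ψ : Fin k → Finset V} (hψ : H.IsCliqueEmb k ψ) : k ≤ #H.edges * H.wedOf ψ := by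
  have hcov : (univ : Finset (Fin k)) ⊆
      H.edges.biUnion fun e => univ.filter fun i => (ψ i ∩ e).Nonempty := by
    intro i _
    obtain ⟨v, hv⟩ := hψ.1 i
    obtain ⟨e, he, hve⟩ := hcover v
    exact mem_biUnion.2 ⟨e, he, mem_filter.2 ⟨mem_univ i, v, mem_inter.2 ⟨hv, hve⟩⟩⟩
  calc k = #(univ : Finset (Fin k)) := (card_fin k).symm
    _ ≤ _ := card_le_card hcov
    _ ≤ _ := card_biUnion_le_card_mul _ _ _ fun e he => le_sup (f := fun e =>
        #(univ.filter fun i => (ψ i ∩ e).Nonempty)) he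

theorem wed_le_wedOf {k : ℕ} {ψ : Fin k → Finset V} (hψ : H.IsCliqueEmb k ψ) :
    H.wed k ≤ H.wedOf ψ :=
  Nat.sInf_le (s := {w | ∃ ψ : Fin k → Finset V, H.IsCliqueEmb k ψ ∧ H.wedOf ψ ≤ w})
    ⟨ψ, hψ, le_rfl⟩

theorem card_le_card_edges_mul_wed (hcover : ∀ v, ∃ e ∈ H.edges, v ∈ e)
    {k : ℕ} {ψ : Fin k → Finset V} (hψ : H.IsCliqueEmb k ψ) : k ≤ #H.edges * H.wed k := by
  have hne : {w | ∃ ψ : Fin k → Finset V, H.IsCliqueEmb k ψ ∧ H.wedOf ψ ≤ w}.Nonempty :=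
    ⟨_, ψ, hψ, le_rfl⟩
  obtain ⟨φ, hφ, hφw⟩ := Nat.sInf_mem hne
  exact (H.card_le_card_edges_mul_wedOf hcover hφ).trans (Nat.mul_le_mul_left _ hφw)

theorem bddAbove_embPower_set (hcover : ∀ v, ∃ e ∈ H.edges, v ∈ e) :
    BddAbove {x : ℝ | ∃ k : ℕ, 3 ≤ k ∧ x = (k : ℝ) / (H.wed k : ℝ)} := by
  refine ⟨#H.edges, ?_⟩
  rintro _ ⟨k, -, rfl⟩
  rcases Nat.eq_zero_or_pos (H.wed k) with h0 | hpos
  · simp [h0]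
  · obtain ⟨ψ, hψ, -⟩ := Nat.sInf_mem (Nat.nonempty_of_pos_sInf hpos)
    rw [div_le_iff₀ (by exact_mod_cast hpos)]
    exact_mod_cast H.card_le_card_edges_mul_wed hcover hψ

theorem div_le_embPower (hcover : ∀ v, ∃ e ∈ H.edges, v ∈ e)
    {k w : ℕ} (hk : 3 ≤ k) {ψ : Fin k → Finset V} (hψ : H.IsCliqueEmb k ψ)
    (hw : H.wedOf ψ ≤ w) : (k : ℝ) / w ≤ embPower H := by
  have hwed : H.wed k ≤ w := (H.wed_le_wedOf hψ).trans hw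
  have hwed_pos : 0 < H.wed k := by
    have := H.card_le_card_edges_mul_wed hcover hψ
    by_contra! h
    simp_all
  calc (k : ℝ) / w ≤ k / H.wed k :=
        div_le_div_of_nonneg_left (by positivity) (by exact_mod_cast hwed_pos)
          (by exact_mod_cast hwed)
    _ ≤ embPower H := le_csSup (H.bddAbove_embPower_set hcover) ⟨k, hk, rfl⟩

theorem two_sub_inv_le_embPower (hcover : ∀ v, ∃ e ∈ H.edges, v ∈ e)
    {c k : ℕ} (hc : 2 ≤ c) (hk : k + 1 = 2 * c) {ψ : Fin k → Finset V}
    (hψ : H.IsCliqueEmb k ψ) (hw : H.wedOf ψ ≤ c) :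
    (2 : ℝ) - 1 / c ≤ embPower H := by
  have hk' : (k : ℝ) = 2 * c - 1 := by
    rw [eq_sub_iff_add_eq]; exact_mod_cast hk
  have hc' : (c : ℝ) ≠ 0 := by positivity
  calc (2 : ℝ) - 1 / c = k / c := by rw [hk']; field_simp
    _ ≤ embPower H := H.div_le_embPower hcover (by omega) hψ hw

end EmbeddingPower

/-- `H` arises from `H'` by contracting the fibres of `π`, each of which lies in an edge. -/
structure IsContraction (H' : Hypergraph' W) (H : Hypergraph' V) (π : W → V) : Prop where
  surjective : Function.Surjective π
  image_subset : ∀ e' ∈ H'.edges, ∃ e ∈ H.edges, e'.image π ⊆ e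
  exists_image_eq : ∀ e ∈ H.edges, ∃ e' ∈ H'.edges, e'.image π = e
  fiber : ∀ x y, π x = π y → ∃ e' ∈ H'.edges, x ∈ e' ∧ y ∈ e'

namespace IsContraction

variable {H' : Hypergraph' W} {H : Hypergraph' V} {π : W → V}

theorem connSet_preimage (hπ : IsContraction H' H π) {S : Finset V} (hS : H.connSet S) :
    H'.connSet (preimageFinset π S) := by
  intro a ha b hb
  rw [mem_preimageFinset] at ha hb
  -- lift a path from `π a` edge by edge, moving inside a fibre at the end of each step
  suffices ∀ c, Relation.ReflTransGen (H.adjWithin S) (π a) c → ∀ c', π c' = c →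
      Relation.ReflTransGen (H'.adjWithin (preimageFinset π S)) a c' from
    this _ (hS _ ha _ hb) b rfl
  intro c hc
  induction hc with
  | refl =>
    intro c' hc'
    obtain ⟨e', he', hae', hce'⟩ := hπ.fiber a c' hc'.symm
    exact .single ⟨by simpa, by simpa [hc'], e', he', hae', hce'⟩
  | tail _ hcd ih =>
    obtain ⟨hc, hd, e, he, hce, hde⟩ := hcd
    obtain ⟨e', he', rfl⟩ := hπ.exists_image_eq e he
    obtain ⟨c₁, hc₁, rfl⟩ := mem_image.1 hce
    obtain ⟨d₁, hd₁, rfl⟩ := mem_image.1 hde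
    intro d' hd'
    obtain ⟨f', hf', hdf₁, hdf'⟩ := hπ.fiber d₁ d' hd'.symm
    exact ((ih c₁ rfl).tail ⟨by simpa, by simpa, e', he', hc₁, hd₁⟩).tail
      ⟨by simpa, by simpa [hd'], f', hf', hdf₁, hdf'⟩

theorem touch_preimage (hπ : IsContraction H' H π) {S T : Finset V} (h : H.touch S T) :
    H'.touch (preimageFinset π S) (preimageFinset π T) := by
  rcases h with ⟨v, hv⟩ | ⟨e, he, hS, hT⟩
  · obtain ⟨x, rfl⟩ := hπ.surjective v
    exact .inl ⟨x, by simpa using hv⟩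
  · obtain ⟨e', he', rfl⟩ := hπ.exists_image_eq e he
    rw [inter_comm] at hS hT
    exact .inr ⟨e', he', by rwa [inter_comm, preimageFinset_inter_nonempty_iff],
      by rwa [inter_comm, preimageFinset_inter_nonempty_iff]⟩

theorem isCliqueEmb_preimage (hπ : IsContraction H' H π) {k : ℕ} {ψ : Fin k → Finset V}
    (hψ : H.IsCliqueEmb k ψ) : H'.IsCliqueEmb k fun i => preimageFinset π (ψ i) := by
  refine ⟨fun i => ?_, fun i => hπ.connSet_preimage (hψ.2.1 i),
    fun i j hij => hπ.touch_preimage (hψ.2.2 i j hij)⟩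
  obtain ⟨v, hv⟩ := hψ.1 i
  obtain ⟨x, rfl⟩ := hπ.surjective v
  exact ⟨x, by simpa using hv⟩

theorem wedOf_preimage_le (hπ : IsContraction H' H π) {k : ℕ} (ψ : Fin k → Finset V) :
    H'.wedOf (fun i => preimageFinset π (ψ i)) ≤ H.wedOf ψ := by
  refine Finset.sup_le fun e' he' => ?_
  obtain ⟨e, he, hsub⟩ := hπ.image_subset e' he'
  refine le_trans (card_le_card fun i => ?_)
    (le_sup (f := fun e => #(univ.filter fun i => (ψ i ∩ e).Nonempty)) he)
  simp only [mem_filter, mem_univ, true_and, preimageFinset_inter_nonempty_iff]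
  exact fun hi => hi.mono (inter_subset_inter_left hsub)

end IsContraction

end Hypergraph'

section Cycle

open Hypergraph' Fin.NatCast Fin.CommRing

variable {n : ℕ} [NeZero n]

theorem mem_cycleHG_edges {e : Finset (Fin n)} :
    e ∈ (cycleHG n).edges ↔ ∃ t : Fin n, {t, t + 1} = e := by
  simp [cycleHG]

theorem pair_mem_cycleHG_edges (t : Fin n) : {t, t + 1} ∈ (cycleHG n).edges :=
  mem_cycleHG_edges.2 ⟨t, rfl⟩

theorem exists_mem_cycleHG_edges (v : Fin n) : ∃ e ∈ (cycleHG n).edges, v ∈ e :=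
  ⟨_, pair_mem_cycleHG_edges v, mem_insert_self _ _⟩

theorem wedOf_cycleHG_le {k D : ℕ} {ψ : Fin k → Finset (Fin n)}
    (h : ∀ t : Fin n, #(univ.filter fun i => (ψ i ∩ {t, t + 1}).Nonempty) ≤ D) :
    (cycleHG n).wedOf ψ ≤ D :=
  Finset.sup_le fun e he => by
    obtain ⟨t, rfl⟩ := mem_cycleHG_edges.1 he
    exact h t

def arc (a : Fin n) (m : ℕ) : Finset (Fin n) :=
  (range m).image fun j : ℕ => a + (j : Fin n)

theorem mem_arc {a x : Fin n} {m : ℕ} : x ∈ arc a m ↔ ∃ j < m, a + (j : Fin n) = x := by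
  simp [arc]

theorem add_mem_arc (a : Fin n) {j m : ℕ} (hj : j < m) : a + (j : Fin n) ∈ arc a m :=
  mem_arc.2 ⟨j, hj, rfl⟩

theorem self_mem_arc (a : Fin n) {m : ℕ} (hm : 0 < m) : a ∈ arc a m := by
  simpa using add_mem_arc a hm

theorem connSet_arc (a : Fin n) (m : ℕ) : (cycleHG n).connSet (arc a m) := by
  refine connSet_of_reflTransGen a fun x hx => ?_
  obtain ⟨j, hj, rfl⟩ := mem_arc.1 hx
  induction j with
  | zero => simpa using Relation.ReflTransGen.refl
  | succ j ih =>
    refine (ih (by omega) (add_mem_arc a (by omega))).tail ⟨add_mem_arc a (by omega), hx, _,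
      pair_mem_cycleHG_edges (a + (j : Fin n)), mem_insert_self _ _, ?_⟩
    simp [add_assoc]

theorem touch_arc_arc_add (a : Fin n) {m k d : ℕ} (hm : 0 < m) (hk : 0 < k) (hd : d ≤ m) :
    (cycleHG n).touch (arc a m) (arc (a + (d : Fin n)) k) := by
  rcases hd.lt_or_eq with hd | rfl
  · exact .inl ⟨a + (d : Fin n), mem_inter.2 ⟨add_mem_arc a hd, self_mem_arc _ hk⟩⟩
  · obtain ⟨c, rfl⟩ : ∃ c, d = c + 1 := ⟨d - 1, by omega⟩
    refine .inr ⟨_, pair_mem_cycleHG_edges (a + (c : Fin n)), ⟨a + (c : Fin n), ?_⟩,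
      ⟨a + (c : Fin n) + 1, ?_⟩⟩
    · exact mem_inter.2 ⟨mem_insert_self _ _, add_mem_arc a (by omega)⟩
    · refine mem_inter.2 ⟨mem_insert_of_mem (mem_singleton_self _), ?_⟩
      simpa [add_assoc] using self_mem_arc (a + ((c + 1 : ℕ) : Fin n)) hk

theorem touch_arc_of_ne {m : ℕ} (hm : 0 < m) {i j : Fin (2 * m + 1)} (hij : i ≠ j) :
    (cycleHG (2 * m + 1)).touch (arc i m) (arc j m) := by
  -- the two gaps between `i` and `j` add up to `2m + 1`, so one of them is at most `m`
  have hgap : (j - i).val + (i - j).val = 2 * m + 1 := by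
    rw [← neg_sub j i, Fin.val_neg, if_neg (sub_ne_zero.2 hij.symm)]
    have := (j - i).isLt
    omega
  rcases le_or_gt (j - i).val m with h | h
  · simpa using touch_arc_arc_add i hm hm h
  · simpa using (touch_arc_arc_add j hm hm (show (i - j).val ≤ m by omega)).symm

theorem card_filter_arc_inter_edge_le (m : ℕ) (t : Fin n) :
    #(univ.filter fun i : Fin n => (arc i m ∩ {t, t + 1}).Nonempty) ≤ m + 1 := by
  have hsub : univ.filter (fun i : Fin n => (arc i m ∩ {t, t + 1}).Nonempty) ⊆
      (range (m + 1)).image fun j : ℕ => t + 1 - j := by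
    intro i hi
    obtain ⟨x, hx⟩ := (mem_filter.1 hi).2
    obtain ⟨hxi, hxt⟩ := mem_inter.1 hx
    obtain ⟨j, hj, rfl⟩ := mem_arc.1 hxi
    rcases mem_insert.1 hxt with h | h
    · exact mem_image.2 ⟨j + 1, by simp; omega, by rw [← h]; push_cast; ring⟩
    · exact mem_image.2 ⟨j, by simp; omega, by rw [← mem_singleton.1 h]; ring⟩
  exact (card_le_card hsub).trans (card_image_le.trans (card_range _).le)

theorem exists_cliqueEmb_cycleHG_of_odd (hn : 3 ≤ n) (hodd : Odd n) :
    ∃ ψ : Fin n → Finset (Fin n),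
      (cycleHG n).IsCliqueEmb n ψ ∧ (cycleHG n).wedOf ψ ≤ (n + 1) / 2 := by
  obtain ⟨m, rfl⟩ := hodd
  have hm : 0 < m := by omega
  exact ⟨fun i => arc i m, ⟨fun i => ⟨i, self_mem_arc i hm⟩, fun i => connSet_arc i m,
    fun _ _ => touch_arc_of_ne hm⟩,
    wedOf_cycleHG_le fun t => (card_filter_arc_inter_edge_le m t).trans (by omega)⟩

theorem isContraction_cycleHG (n : ℕ) [NeZero n] :
    IsContraction (cycleHG (n + 1)) (cycleHG n) fun x => (x.val : Fin n) := by
  refine ⟨fun y => ⟨y.castSucc, by simp⟩, ?_, ?_, ?_⟩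
  · intro e' he'
    obtain ⟨x, rfl⟩ := mem_cycleHG_edges.1 he'
    cases x using Fin.lastCases with
    | last => exact ⟨_, pair_mem_cycleHG_edges 0, by simp⟩
    | cast y => exact ⟨_, pair_mem_cycleHG_edges y, by simp⟩
  · intro e he
    obtain ⟨y, rfl⟩ := mem_cycleHG_edges.1 he
    exact ⟨_, pair_mem_cycleHG_edges y.castSucc, by simp⟩
  · -- the only fibre with two points is `{last n, 0} = {last n, last n + 1}`
    intro x y hxy
    cases x using Fin.lastCases with
    | last =>
      cases y using Fin.lastCases with
      | last => exact ⟨_, pair_mem_cycleHG_edges (Fin.last n), by simp⟩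
      | cast b => exact ⟨_, pair_mem_cycleHG_edges (Fin.last n), by simp_all⟩
    | cast a =>
      cases y using Fin.lastCases with
      | last => exact ⟨_, pair_mem_cycleHG_edges (Fin.last n), by simp_all⟩
      | cast b => exact ⟨_, pair_mem_cycleHG_edges a.castSucc, by simp_all⟩

theorem exists_cliqueEmb_cycleHG_of_even {ℓ : ℕ} [NeZero ℓ] (hℓ : 3 ≤ ℓ) (heven : Even ℓ) :
    ∃ ψ : Fin (ℓ - 1) → Finset (Fin ℓ),
      (cycleHG ℓ).IsCliqueEmb (ℓ - 1) ψ ∧ (cycleHG ℓ).wedOf ψ ≤ ℓ / 2 := by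
  obtain ⟨n, rfl⟩ : ∃ n, ℓ = n + 1 := ⟨ℓ - 1, by omega⟩
  have : NeZero n := ⟨by omega⟩
  have hodd : Odd n := Nat.not_even_iff_odd.1 (Nat.even_add_one.1 heven)
  obtain ⟨ψ, hψ, hw⟩ :=
    exists_cliqueEmb_cycleHG_of_odd (by obtain ⟨c, rfl⟩ := hodd; omega) hodd
  have hπ := isContraction_cycleHG n
  rw [Nat.add_sub_cancel]
  exact ⟨_, hπ.isCliqueEmb_preimage hψ, (hπ.wedOf_preimage_le ψ).trans hw⟩

end Cycle

/-- For the `ℓ`-cycle (`ℓ ≥ 3`): if `ℓ` is odd there is an embedding of the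
`ℓ`-clique with weak edge depth `(ℓ+1)/2`; if `ℓ` is even there is an embedding
of the `(ℓ−1)`-clique with weak edge depth `ℓ/2`; hence the clique embedding
power is at least `2 − 1/⌈ℓ/2⌉`. -/
theorem cycle_emb_lower_bound (ℓ : ℕ) [NeZero ℓ] (hℓ : 3 ≤ ℓ) :
    (Odd ℓ → ∃ ψ : Fin ℓ → Finset (Fin ℓ),
      (cycleHG ℓ).IsCliqueEmb ℓ ψ ∧ (cycleHG ℓ).wedOf ψ ≤ (ℓ + 1) / 2) ∧
    (Even ℓ → ∃ ψ : Fin (ℓ - 1) → Finset (Fin ℓ),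
      (cycleHG ℓ).IsCliqueEmb (ℓ - 1) ψ ∧ (cycleHG ℓ).wedOf ψ ≤ ℓ / 2) ∧
    (2 : ℝ) - 1 / (((ℓ + 1) / 2 : ℕ) : ℝ) ≤ embPower (cycleHG ℓ) := by
  refine ⟨exists_cliqueEmb_cycleHG_of_odd hℓ, exists_cliqueEmb_cycleHG_of_even hℓ, ?_⟩
  have hcover := exists_mem_cycleHG_edges (n := ℓ)
  rcases Nat.even_or_odd ℓ with heven | hodd
  · obtain ⟨ψ, hψ, hw⟩ := exists_cliqueEmb_cycleHG_of_even hℓ heven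
    exact (cycleHG ℓ).two_sub_inv_le_embPower hcover (by omega)
      (by obtain ⟨c, rfl⟩ := heven; omega) hψ (hw.trans (by omega))
  · obtain ⟨ψ, hψ, hw⟩ := exists_cliqueEmb_cycleHG_of_odd hℓ hodd
    exact (cycleHG ℓ).two_sub_inv_le_embPower hcover (by omega)
      (by obtain ⟨c, rfl⟩ := hodd; omega) hψ hw
end

section
/- For the almost-clique A_ℓ, the fractional hypertree width is at most (ℓ−1)/2: the tree decomposition with two bags {x_1, x_2, …, x_{k+1}} and {x_2, …, x_ℓ} has each bag admitting a fractional edge cover of weight at most (ℓ−1)/2. -/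
open Finset

/-- The almost-clique `A_ℓ`: vertices `x_1 = 0, …, x_ℓ = ℓ-1`; the vertices
`1, …, ℓ-1` form a clique and vertex `0` is adjacent exactly to `1, …, k`. -/
def almostClique (ℓ k : ℕ) : SimpleGraph (Fin ℓ) where
  Adj i j := i ≠ j ∧
    (((i : ℕ) ≠ 0 ∧ (j : ℕ) ≠ 0) ∨ ((i : ℕ) = 0 ∧ (j : ℕ) ≤ k) ∨
      ((j : ℕ) = 0 ∧ (i : ℕ) ≤ k))
  symm := by
    constructor
    rintro a b ⟨h1, h2⟩
    exact ⟨h1.symm, by tauto⟩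
  loopless := by
    constructor
    rintro a ⟨h, _⟩
    exact h rfl

open scoped Classical in
/-- A graph viewed as a hypergraph whose hyperedges are its edges. -/
noncomputable def graphHG {W : Type*} [DecidableEq W] [Fintype W]
    (G : SimpleGraph W) : Hypergraph' W :=
  ⟨Finset.univ.filter fun e : Finset W => ∃ u v : W, G.Adj u v ∧ e = {u, v}⟩

/-- `w` is a fractional edge cover of the vertex set `S` in `H`, assigning
nonnegative weights to hyperedges so every vertex of `S` is covered with total
weight at least 1. -/
def IsFracCover {W : Type*} [DecidableEq W] [Fintype W] (H : Hypergraph' W)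
    (S : Finset W) (w : Finset W → ℝ) : Prop :=
  (∀ e, 0 ≤ w e) ∧ (∀ e ∉ H.edges, w e = 0) ∧
    ∀ v ∈ S, 1 ≤ ∑ e ∈ H.edges, (if v ∈ e then w e else 0)

/-!
Both bags are cliques of `A_ℓ`, of sizes `k + 1 ≤ ℓ - 1` and `ℓ - 1`. An `n`-clique is
fractionally covered with weight `n / 2` by giving each of its `n.choose 2` edges weight
`1 / (n - 1)`, since every vertex lies on exactly `n - 1` of them. The two bags contain every
vertex and every edge of `A_ℓ`, and two such bags always form a tree decomposition over the
one-edge tree.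
-/

open SimpleGraph

lemma SimpleGraph.connected_induce_top {V : Type*} {s : Set V} (hs : s.Nonempty) :
    ((⊤ : SimpleGraph V).induce s).Connected := by
  have : Nonempty s := hs.to_subtype
  rw [show (⊤ : SimpleGraph V).induce s = ⊤ by ext; simp [Subtype.ext_iff]]
  exact connected_top

lemma SimpleGraph.isTree_top_fin_two : (⊤ : SimpleGraph (Fin 2)).IsTree := by
  convert isTree_starGraph (0 : Fin 2)
  ext u v
  fin_cases u <;> fin_cases v <;> simp [starGraph]

lemma Finset.card_filter_mem_powersetCard_two {α : Type*} [DecidableEq α] {s : Finset α} {v : α}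
    (hv : v ∈ s) : #{e ∈ s.powersetCard 2 | v ∈ e} = #s - 1 := by
  have : {e ∈ s.powersetCard 2 | v ∈ e} = (s.erase v).image fun u => {v, u} := by
    ext e
    simp only [mem_filter, mem_powersetCard, mem_image, mem_erase]
    constructor
    · rintro ⟨⟨hsub, hcard⟩, hve⟩
      obtain ⟨x, y, hxy, rfl⟩ := card_eq_two.1 hcard
      rcases mem_insert.1 hve with rfl | hvy
      · exact ⟨y, ⟨hxy.symm, hsub (by simp)⟩, rfl⟩
      · obtain rfl := mem_singleton.1 hvy
        exact ⟨x, ⟨hxy, hsub (by simp)⟩, pair_comm _ _⟩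
    · rintro ⟨u, ⟨huv, hu⟩, rfl⟩
      exact ⟨⟨insert_subset hv (singleton_subset_iff.2 hu), card_pair huv.symm⟩,
        mem_insert_self _ _⟩
  rw [this, card_image_of_injOn, card_erase_of_mem hv]
  intro a ha b _ (hab : ({v, a} : Finset α) = {v, b})
  have : a ∈ ({v, b} : Finset α) := hab ▸ mem_insert_of_mem (mem_singleton_self a)
  exact (mem_insert.1 this).resolve_left (mem_erase.1 ha).1 |> mem_singleton.1

section FracCover

variable {W : Type*} [DecidableEq W] [Fintype W]

lemma exists_isFracCover_of_le_card_filter_mem (H : Hypergraph' W) (S : Finset W)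
    {P : Finset (Finset W)} (hP : P ⊆ H.edges) {d : ℕ} (hd : 0 < d)
    (hdeg : ∀ v ∈ S, d ≤ #{e ∈ P | v ∈ e}) :
    ∃ w, IsFracCover H S w ∧ ∑ e ∈ H.edges, w e = #P / d := by
  have hsum (p : Finset W → Prop) [DecidablePred p] :
      ∑ e ∈ H.edges, (if e ∈ P then (if p e then (d : ℝ)⁻¹ else 0) else 0) =
        #{e ∈ P | p e} / d := by
    rw [sum_ite_mem, inter_eq_right.2 hP, ← sum_filter, sum_const, nsmul_eq_mul, div_eq_mul_inv]
  refine ⟨fun e => if e ∈ P then (d : ℝ)⁻¹ else 0, ⟨fun e => ?_, fun e he => if_neg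
    fun h => he (hP h), fun v hv => ?_⟩, by simpa using hsum fun _ => True⟩
  · dsimp only; split <;> positivity
  · calc (1 : ℝ) ≤ #{e ∈ P | v ∈ e} / d := by
          rw [le_div_iff₀ (by positivity), one_mul]
          exact_mod_cast hdeg v hv
      _ = _ := by
          rw [← hsum]
          exact sum_congr rfl fun e _ => by simp only [← ite_and, and_comm]

lemma powersetCard_two_subset_graphHG_edges (G : SimpleGraph W) {S : Finset W}
    (hS : G.IsClique (S : Set W)) : S.powersetCard 2 ⊆ (graphHG G).edges := by
  intro e he
  obtain ⟨hsub, u, v, huv, rfl⟩ := by simpa only [mem_powersetCard, card_eq_two] using he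
  simp only [graphHG, mem_filter, mem_univ, true_and]
  exact ⟨u, v, hS (hsub (by simp)) (hsub (by simp)) huv, rfl⟩

lemma exists_isFracCover_of_isClique (G : SimpleGraph W) {S : Finset W}
    (hS : G.IsClique (S : Set W)) (h2 : 2 ≤ #S) :
    ∃ w, IsFracCover (graphHG G) S w ∧ ∑ e ∈ (graphHG G).edges, w e = #S / 2 := by
  obtain ⟨w, hw, hsum⟩ := exists_isFracCover_of_le_card_filter_mem (graphHG G) S
    (powersetCard_two_subset_graphHG_edges G hS) (d := #S - 1) (by omega)
    fun v hv => (card_filter_mem_powersetCard_two hv).ge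
  refine ⟨w, hw, ?_⟩
  have : (#S : ℝ) - 1 ≠ 0 := by
    have : (2 : ℝ) ≤ #S := by exact_mod_cast h2
    linarith
  rw [hsum, card_powersetCard, Nat.cast_choose_two, Nat.cast_sub (by omega), Nat.cast_one]
  field_simp

end FracCover

lemma isTreeDecomp_top_fin_two {V : Type*} [DecidableEq V] [Fintype V] (H : Hypergraph' V)
    {A B : Finset V} (hcover : ∀ v, v ∈ A ∨ v ∈ B)
    (hedges : ∀ e ∈ H.edges, e ⊆ A ∨ e ⊆ B) :
    IsTreeDecomp H ⊤ ![A, B] where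
  tree := isTree_top_fin_two
  covers e he := (hedges e he).elim (⟨0, ·⟩) (⟨1, ·⟩)
  conn v := connected_induce_top <| (hcover v).elim (⟨0, ·⟩) (⟨1, ·⟩)

section AlmostClique

variable {ℓ k : ℕ}

lemma almostClique_isClique_le :
    (almostClique ℓ k).IsClique (({i | (i : ℕ) ≤ k} : Finset (Fin ℓ)) : Set (Fin ℓ)) := by
  intro i hi j hj hij
  simp only [mem_coe, mem_filter, mem_univ, true_and] at hi hj
  exact ⟨hij, by omega⟩

lemma almostClique_isClique_ne_zero :
    (almostClique ℓ k).IsClique (({i | (i : ℕ) ≠ 0} : Finset (Fin ℓ)) : Set (Fin ℓ)) := by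
  intro i hi j hj hij
  simp only [mem_coe, mem_filter, mem_univ, true_and] at hi hj
  exact ⟨hij, Or.inl ⟨hi, hj⟩⟩

lemma subset_or_subset_of_mem_graphHG_almostClique {e : Finset (Fin ℓ)}
    (he : e ∈ (graphHG (almostClique ℓ k)).edges) :
    e ⊆ ({i | (i : ℕ) ≤ k} : Finset (Fin ℓ)) ∨
      e ⊆ ({i | (i : ℕ) ≠ 0} : Finset (Fin ℓ)) := by
  obtain ⟨u, v, ⟨-, huv⟩, rfl⟩ := by simpa [graphHG] using he
  simp only [insert_subset_iff, singleton_subset_iff, mem_filter, mem_univ, true_and]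
  omega

lemma Fin.card_filter_val_le (hk : k < ℓ) : #{i : Fin ℓ | (i : ℕ) ≤ k} = k + 1 := by
  simp_rw [← Nat.lt_succ_iff, Fin.card_filter_val_lt]
  omega

lemma Fin.card_filter_val_ne_zero : #{i : Fin ℓ | (i : ℕ) ≠ 0} = ℓ - 1 := by
  have := card_filter_add_card_filter_not (s := univ) (fun i : Fin ℓ => (i : ℕ) < 1)
  simp only [Fin.card_filter_val_lt, card_univ, Fintype.card_fin, not_lt,
    Nat.one_le_iff_ne_zero] at this
  omega

end AlmostClique

/-- For the almost-clique `A_ℓ`, the tree decomposition with the two bags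
`{x_1, …, x_{k+1}}` and `{x_2, …, x_ℓ}` witnesses `fhw(A_ℓ) ≤ (ℓ−1)/2`: each bag
admits a fractional edge cover of total weight at most `(ℓ−1)/2`. -/
theorem almostClique_fhw_bound (ℓ k : ℕ) (hk : 1 ≤ k) (hkℓ : k < ℓ - 1) :
    ∃ χ : Fin 2 → Finset (Fin ℓ),
      χ 0 = Finset.univ.filter (fun i : Fin ℓ => (i : ℕ) ≤ k) ∧
      χ 1 = Finset.univ.filter (fun i : Fin ℓ => (i : ℕ) ≠ 0) ∧
      IsTreeDecomp (graphHG (almostClique ℓ k)) (⊤ : SimpleGraph (Fin 2)) χ ∧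
      ∀ t : Fin 2, ∃ w : Finset (Fin ℓ) → ℝ,
        IsFracCover (graphHG (almostClique ℓ k)) (χ t) w ∧
        ∑ e ∈ (graphHG (almostClique ℓ k)).edges, w e ≤ ((ℓ : ℝ) - 1) / 2 := by
  have hcover (v : Fin ℓ) :
      v ∈ ({i | (i : ℕ) ≤ k} : Finset (Fin ℓ)) ∨
        v ∈ ({i | (i : ℕ) ≠ 0} : Finset (Fin ℓ)) := by
    simp only [mem_filter, mem_univ, true_and]
    omega
  refine ⟨_, rfl, rfl, isTreeDecomp_top_fin_two _ hcover
    fun _ => subset_or_subset_of_mem_graphHG_almostClique, Fin.forall_fin_two.2 ⟨?_, ?_⟩⟩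
  · obtain ⟨w, hw, hsum⟩ :=
      exists_isFracCover_of_isClique (almostClique ℓ k) almostClique_isClique_le
        (by rw [Fin.card_filter_val_le (by omega)]; omega)
    refine ⟨w, hw, ?_⟩
    rw [hsum, Fin.card_filter_val_le (by omega)]
    have : (k : ℝ) + 2 ≤ ℓ := by exact_mod_cast (by omega : k + 2 ≤ ℓ)
    push_cast
    linarith
  · obtain ⟨w, hw, hsum⟩ :=
      exists_isFracCover_of_isClique (almostClique ℓ k) almostClique_isClique_ne_zero
        (by rw [Fin.card_filter_val_ne_zero]; omega)
    refine ⟨w, hw, ?_⟩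
    rw [hsum, Fin.card_filter_val_ne_zero, Nat.cast_sub (by omega), Nat.cast_one]
end

section
/- If every proper tree decomposition of a hypergraph H has the same set of bags, then H is chordal. Equivalently (contrapositive, for graphs): if a graph G is not chordal, then G has at least two distinct minimal triangulations. -/
/-- A simple graph is chordal: every cycle of length at least 4 has a chord. -/
def IsChordal {W : Type*} (G : SimpleGraph W) : Prop :=
  ∀ ⦃v : W⦄ (c : G.Walk v v), c.IsCycle → 4 ≤ c.length →
    ∃ u w : W, u ∈ c.support ∧ w ∈ c.support ∧ G.Adj u w ∧ s(u, w) ∉ c.edges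

/-- `G'` is a minimal triangulation of `G`: a chordal supergraph of `G` on the
same vertex set such that no intermediate chordal supergraph is strictly smaller. -/
def IsMinimalTriangulation {W : Type*} (G G' : SimpleGraph W) : Prop :=
  G ≤ G' ∧ IsChordal G' ∧
    ∀ G'' : SimpleGraph W, G ≤ G'' → G'' ≤ G' → IsChordal G'' → G'' = G'

/-! A minimal triangulation `G₁` of a non-chordal graph `G` exists below the complete graph, and
it has a fill edge `e`. The complete graph minus `e` is still chordal: a cycle of length `n ≥ 4`
has `n.choose 2 - n ≥ 2` potential chords, so at least one of them survives. It also contains `G`,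
so below it sits a minimal triangulation `G₂` of `G` avoiding `e`, hence `G₂ ≠ G₁`. -/

open Finset SimpleGraph

namespace SimpleGraph.Walk

variable {W : Type*} [DecidableEq W] {G : SimpleGraph W}

def potentialChords {u v : W} (c : G.Walk u v) : Finset (Sym2 W) :=
  c.support.toFinset.offDiag.image Sym2.mk.uncurry \ c.edges.toFinset

theorem mk_mem_potentialChords {u v x y : W} {c : G.Walk u v} :
    s(x, y) ∈ c.potentialChords ↔
      x ∈ c.support ∧ y ∈ c.support ∧ x ≠ y ∧ s(x, y) ∉ c.edges := by
  simp only [potentialChords, mem_sdiff, mem_image, mem_offDiag, List.mem_toFinset]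
  aesop

theorem IsCycle.one_lt_card_potentialChords {v : W} {c : G.Walk v v} (hc : c.IsCycle)
    (hlen : 4 ≤ c.length) : 1 < #c.potentialChords := by
  set n := c.length
  have hsupport : n ≤ #c.support.toFinset := calc
    n = #c.support.tail.toFinset := by
      rw [List.toFinset_card_of_nodup hc.support_nodup, List.length_tail, length_support]; rfl
    _ ≤ #c.support.toFinset := card_le_card fun x => by simpa using List.mem_of_mem_tail
  have hpairs : n.choose 2 ≤ #(c.support.toFinset.offDiag.image Sym2.mk.uncurry) :=
    Sym2.card_image_offDiag c.support.toFinset ▸ Nat.choose_le_choose 2 hsupport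
  have hedges : #c.edges.toFinset ≤ n := (List.toFinset_card_le _).trans c.length_edges.le
  have hchoose : n + 2 ≤ n.choose 2 := by
    rw [Nat.choose_two_right, Nat.le_div_iff_mul_le two_pos]
    calc (n + 2) * 2 ≤ n * 3 := by omega
      _ ≤ n * (n - 1) := Nat.mul_le_mul_left n (by omega)
  calc 1 < n.choose 2 - n := by omega
    _ ≤ #(c.support.toFinset.offDiag.image Sym2.mk.uncurry) - #c.edges.toFinset := by omega
    _ ≤ #c.potentialChords := le_card_sdiff _ _

end SimpleGraph.Walk

theorem isChordal_of_subsingleton_compl_edgeSet {W : Type*} {H : SimpleGraph W}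
    (hH : Hᶜ.edgeSet.Subsingleton) : IsChordal H := by
  classical
  intro v c hc hlen
  obtain ⟨d₁, hd₁, d₂, hd₂, hne⟩ := one_lt_card.1 (hc.one_lt_card_potentialChords hlen)
  obtain ⟨d, hd, hdH⟩ : ∃ d ∈ c.potentialChords, d ∉ Hᶜ.edgeSet := by
    by_contra! h
    exact hne (hH (h d₁ hd₁) (h d₂ hd₂))
  induction d using Sym2.ind with | h x y =>
  obtain ⟨hx, hy, hxy, hchord⟩ := Walk.mk_mem_potentialChords.1 hd
  exact ⟨x, y, hx, hy, by simpa [hxy] using hdH, hchord⟩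

theorem isChordal_top {W : Type*} : IsChordal (⊤ : SimpleGraph W) :=
  isChordal_of_subsingleton_compl_edgeSet (by simp)

theorem isChordal_compl_fromEdgeSet_singleton {W : Type*} (e : Sym2 W) :
    IsChordal (fromEdgeSet {e})ᶜ :=
  isChordal_of_subsingleton_compl_edgeSet <| by
    rw [compl_compl, edgeSet_fromEdgeSet]
    exact Set.subsingleton_singleton.anti Set.sdiff_subset

theorem exists_isMinimalTriangulation_le {W : Type*} [Finite W] {G H : SimpleGraph W}
    (hGH : G ≤ H) (hH : IsChordal H) : ∃ G', IsMinimalTriangulation G G' ∧ G' ≤ H := by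
  obtain ⟨G', hG'H, hmin⟩ :=
    exists_minimal_le_of_wellFoundedLT (fun X => G ≤ X ∧ IsChordal X) H ⟨hGH, hH⟩
  refine ⟨G', ⟨hmin.prop.1, hmin.prop.2, fun G'' hG hle hch => ?_⟩, hG'H⟩
  exact le_antisymm hle (hmin.2 ⟨hG, hch⟩ hle)

theorem two_minimal_triangulations_of_not_chordal_general {W : Type*} [Fintype W]
    (G : SimpleGraph W) (h : ¬ IsChordal G) :
    ∃ G1 G2 : SimpleGraph W, IsMinimalTriangulation G G1 ∧
      IsMinimalTriangulation G G2 ∧ G1 ≠ G2 := by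
  obtain ⟨G₁, hG₁, -⟩ := exists_isMinimalTriangulation_le (le_top : G ≤ ⊤) isChordal_top
  obtain ⟨x, y, hxy, hGxy⟩ : ∃ x y, G₁.Adj x y ∧ ¬ G.Adj x y := by
    by_contra! hle
    exact h (le_antisymm hG₁.1 (fun x y => hle x y) ▸ hG₁.2.1)
  have hGK : G ≤ (fromEdgeSet {s(x, y)})ᶜ := by
    rwa [le_compl_iff_disjoint_right, disjoint_fromEdgeSet, Set.disjoint_singleton_right,
      mem_edgeSet]
  obtain ⟨G₂, hG₂, hG₂K⟩ :=
    exists_isMinimalTriangulation_le hGK (isChordal_compl_fromEdgeSet_singleton s(x, y))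
  refine ⟨G₁, G₂, hG₁, hG₂, fun h₁₂ => ?_⟩
  exact ((compl_adj _ _ _).1 (hG₂K (h₁₂ ▸ hxy))).2 ((fromEdgeSet_adj _).2 ⟨rfl, hxy.ne⟩)

/-- If a graph `G` is not chordal, then `G` has at least two distinct minimal
triangulations. -/
theorem two_minimal_triangulations_of_not_chordal {W : Type*} [Fintype W]
    [DecidableEq W] (G : SimpleGraph W) (h : ¬ IsChordal G) :
    ∃ G1 G2 : SimpleGraph W, IsMinimalTriangulation G G1 ∧
      IsMinimalTriangulation G G2 ∧ G1 ≠ G2 :=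
  two_minimal_triangulations_of_not_chordal_general G h
end

section
/- In every minimal triangulation of the hyper-boat graph Q_hb (two triangles {y_1,y_2,y_3} and {z_1,z_2,z_3} joined by the perfect matching y_iz_i, i = 1,2,3), there is a 4-clique containing two vertices from {y_1,y_2,y_3} and two from {z_1,z_2,z_3}. -/
/-- The hyper-boat graph `Q_hb`: two triangles on `y = {0,1,2}` and
`z = {3,4,5}` joined by the perfect matching `y_i z_i`. -/
def Qhb : SimpleGraph (Fin 6) where
  Adj i j := i ≠ j ∧
    (((i : ℕ) < 3 ∧ (j : ℕ) < 3) ∨ (3 ≤ (i : ℕ) ∧ 3 ≤ (j : ℕ)) ∨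
      ((i : ℕ) + 3 = (j : ℕ)) ∨ ((j : ℕ) + 3 = (i : ℕ)))
  symm := by
    constructor
    rintro a b ⟨h1, h2⟩
    exact ⟨h1.symm, by tauto⟩
  loopless := by
    constructor
    rintro a ⟨h, _⟩
    exact h rfl

theorem IsChordal.adj_or_adj_of_square {W : Type*} {G : SimpleGraph W} (hG : IsChordal G)
    {a b c d : W} (hab : G.Adj a b) (hbc : G.Adj b c) (hcd : G.Adj c d) (hda : G.Adj d a)
    (hac : a ≠ c) (hbd : b ≠ d) :
    G.Adj a c ∨ G.Adj b d := by
  let square : G.Walk a a := .cons hab (.cons hbc (.cons hcd (.cons hda .nil)))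
  have hcycle : square.IsCycle := by
    simp [square, SimpleGraph.Walk.cons_isCycle_iff, hab.ne, hbc.ne, hcd.ne, hda.ne, hac, hbd,
      hab.ne.symm, hda.ne.symm, hac.symm]
  obtain ⟨u, w, hu, hw, huw, hchord⟩ := hG square hcycle (by simp [square])
  simp only [square, SimpleGraph.Walk.support_cons, SimpleGraph.Walk.support_nil,
    List.mem_cons, List.not_mem_nil, or_false] at hu hw
  simp [square] at hchord
  rcases hu with rfl | rfl | rfl | rfl | rfl <;> rcases hw with rfl | rfl | rfl | rfl | rfl <;>
    simp_all [huw.symm]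

theorem exists_rectangle_of_refl_of_cotrans {α : Type*} {R : α → α → Prop}
    (hrefl : ∀ i, R i i) (hcotrans : ∀ i j k, R i j → R i k ∨ R k j)
    {i j k : α} (hij : i ≠ j) (hik : i ≠ k) (hjk : j ≠ k) :
    ∃ a b c d, a ≠ b ∧ c ≠ d ∧ R a c ∧ R a d ∧ R b c ∧ R b d := by
  suffices key : ∀ i j k, i ≠ j → i ≠ k → j ≠ k → R i j →
      ∃ a b c d, a ≠ b ∧ c ≠ d ∧ R a c ∧ R a d ∧ R b c ∧ R b d by
    rcases hcotrans i i j (hrefl i) with hij' | hji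
    · exact key i j k hij hik hjk hij'
    · exact key j i k hij.symm hjk hik hji
  intro i j k hij hik hjk hij'
  rcases hcotrans i j k hij' with hik' | hkj
  · rcases hcotrans j j k (hrefl j) with hjk' | hkj
    · exact ⟨i, j, j, k, hij, hjk, hij', hik', hrefl j, hjk'⟩
    · exact ⟨i, k, j, k, hik, hjk, hij', hik', hkj, hrefl k⟩
  · rcases hcotrans i i k (hrefl i) with hik' | hki
    · exact ⟨i, k, j, k, hik, hjk, hij', hik', hkj, hrefl k⟩
    · exact ⟨i, k, i, j, hik, hij, hrefl i, hij', hki, hkj⟩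

namespace Qhb

def y (i : Fin 3) : Fin 6 := Fin.castAdd 3 i

def z (i : Fin 3) : Fin 6 := Fin.natAdd 3 i

theorem y_ne_z (i j : Fin 3) : y i ≠ z j := by
  revert i j; decide

theorem adj_y_y {i j : Fin 3} (h : i ≠ j) : Qhb.Adj (y i) (y j) :=
  ⟨(Fin.castAdd_injective 3 3).ne h, .inl ⟨i.isLt, j.isLt⟩⟩

theorem adj_z_z {i j : Fin 3} (h : i ≠ j) : Qhb.Adj (z i) (z j) :=
  ⟨(Fin.natAdd_injective 3 3).ne h, .inr <| .inl ⟨by simp [z], by simp [z]⟩⟩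

theorem adj_y_z_self (i : Fin 3) : Qhb.Adj (y i) (z i) :=
  ⟨y_ne_z i i, .inr <| .inr <| .inl (by simp [y, z])⟩

theorem adj_y_z_cotrans {G : SimpleGraph (Fin 6)} (hle : Qhb ≤ G) (hG : IsChordal G)
    {i j k : Fin 3} (h : G.Adj (y i) (z j)) : G.Adj (y i) (z k) ∨ G.Adj (y k) (z j) := by
  by_cases hki : k = i
  · exact .inl (hki ▸ hle (adj_y_z_self k))
  by_cases hkj : k = j
  · exact .inl (hkj ▸ h)
  exact (hG.adj_or_adj_of_square h (hle (adj_z_z (Ne.symm hkj))) (hle (adj_y_z_self k)).symm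
    (hle (adj_y_y hki)) (y_ne_z i k) (y_ne_z k j).symm).imp id fun h' => h'.symm

theorem exists_cross_clique_of_chordal {G : SimpleGraph (Fin 6)} (hle : Qhb ≤ G)
    (hG : IsChordal G) :
    ∃ i j k l : Fin 6, (i : ℕ) < 3 ∧ (j : ℕ) < 3 ∧ i ≠ j ∧
      3 ≤ (k : ℕ) ∧ 3 ≤ (l : ℕ) ∧ k ≠ l ∧
      G.Adj i j ∧ G.Adj i k ∧ G.Adj i l ∧ G.Adj j k ∧ G.Adj j l ∧ G.Adj k l := by
  obtain ⟨a, b, c, d, hab, hcd, hac, had, hbc, hbd⟩ :=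
    exists_rectangle_of_refl_of_cotrans (R := fun i j => G.Adj (y i) (z j))
      (fun i => hle (adj_y_z_self i)) (fun _ _ _ => adj_y_z_cotrans hle hG)
      (i := 0) (j := 1) (k := 2) (by decide) (by decide) (by decide)
  exact ⟨y a, y b, z c, z d, a.isLt, b.isLt, (Fin.castAdd_injective 3 3).ne hab, by simp [z],
    by simp [z], (Fin.natAdd_injective 3 3).ne hcd, hle (adj_y_y hab), hac, had, hbc, hbd,
    hle (adj_z_z hcd)⟩

end Qhb

/-- Every minimal triangulation of the hyper-boat graph contains a 4-clique with
two vertices from the `y`-side and two from the `z`-side. -/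
theorem Qhb_minimal_triangulation_has_4clique (G' : SimpleGraph (Fin 6))
    (h : IsMinimalTriangulation Qhb G') :
    ∃ i j k l : Fin 6, (i : ℕ) < 3 ∧ (j : ℕ) < 3 ∧ i ≠ j ∧
      3 ≤ (k : ℕ) ∧ 3 ≤ (l : ℕ) ∧ k ≠ l ∧
      G'.Adj i j ∧ G'.Adj i k ∧ G'.Adj i l ∧ G'.Adj j k ∧ G'.Adj j l ∧
      G'.Adj k l :=
  Qhb.exists_cross_clique_of_chordal h.1 h.2.1
end
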